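/- arXiv:2309.07769 — 3 statements merged into one kernel-verified Lean document; each statement's English description precedes it below -/
import Mathlib

section
/- Let f : ℂ → ℂ be complex-differentiable on an open set containing the closed second quadrant Q = {z ∈ ℂ : Re z ≤ 0 and Im z ≥ 0}, and suppose there exist constants C > 0 and ε > 0 such that ‖f(z)‖ ≤ C·exp(−ε·‖z‖) for all z ∈ Q. Then the integral of f along the negative real axis can be rotated onto the positive imaginary axis: ∫_{x ∈ (−∞,0)} f(x) dx = −i · ∫_{t ∈ (0,∞)} f(i·t) dt, both integrals being absolutely convergent. -/
/-!
Cauchy's theorem on the rectangle with corners `-R` and `R i`, which lies in the second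
quadrant, writes the integral over `[-R, 0]` as the integral up the imaginary axis (times `-i`)
plus the integrals over the top and left edges. Those two edges have length `R` and lie at
distance at least `R` from the origin, so the exponential bound makes them `O(R e^{-εR})`;
letting `R → ∞` gives the rotation, the decay also giving absolute convergence along both axes.
-/

open MeasureTheory Set Complex Filter Topology
open scoped Interval

theorem integrable_exp_neg_mul_abs {ε : ℝ} (hε : 0 < ε) :
    Integrable fun x : ℝ => Real.exp (-ε * |x|) := by
  rw [← integrableOn_univ, ← Iic_union_Ioi (a := (0 : ℝ))]
  refine IntegrableOn.union ?_ ?_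
  · refine (integrableOn_exp_mul_Iic hε 0).congr_fun (fun x hx => ?_) measurableSet_Iic
    simp only [abs_of_nonpos (mem_Iic.mp hx), mul_neg, neg_mul, neg_neg]
  · refine (exp_neg_integrableOn_Ioi 0 hε).congr_fun (fun x hx => ?_) measurableSet_Ioi
    rw [abs_of_pos hx]

theorem integrableOn_of_norm_le_exp_neg_abs {E : Type*} [NormedAddCommGroup E] {g : ℝ → E}
    {s : Set ℝ} {C ε : ℝ} (hs : MeasurableSet s) (hg : ContinuousOn g s) (hε : 0 < ε)
    (hbound : ∀ x ∈ s, ‖g x‖ ≤ C * Real.exp (-ε * |x|)) : IntegrableOn g s :=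
  ((integrable_exp_neg_mul_abs hε).const_mul C).integrableOn.mono' (hg.aestronglyMeasurable hs)
    (ae_restrict_of_forall_mem hs hbound)

def secondQuadrant : Set ℂ := {z | z.re ≤ 0 ∧ 0 ≤ z.im}

section SecondQuadrant

variable {E : Type*} [NormedAddCommGroup E] {f : ℂ → E} {C ε : ℝ}

theorem integrableOn_comp_of_mapsTo_secondQuadrant {γ : ℝ → ℂ} {s : Set ℝ}
    (hf : ContinuousOn f secondQuadrant) (hε : 0 < ε)
    (hbound : ∀ z ∈ secondQuadrant, ‖f z‖ ≤ C * Real.exp (-ε * ‖z‖))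
    (hs : MeasurableSet s) (hγ : Continuous γ) (hγs : MapsTo γ s secondQuadrant)
    (hγnorm : ∀ t, ‖γ t‖ = |t|) : IntegrableOn (f ∘ γ) s :=
  integrableOn_of_norm_le_exp_neg_abs hs (hf.comp hγ.continuousOn hγs) hε fun t ht =>
    hγnorm t ▸ hbound _ (hγs ht)

theorem tendsto_intervalIntegral_zero_of_le_norm {γ : ℝ → ℝ → ℂ} {a b : ℝ → ℝ}
    [NormedSpace ℝ E] (hC : 0 ≤ C) (hε : 0 < ε)
    (hbound : ∀ z ∈ secondQuadrant, ‖f z‖ ≤ C * Real.exp (-ε * ‖z‖))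
    (hlen : ∀ᶠ R in atTop, |b R - a R| ≤ R)
    (hγ : ∀ᶠ R in atTop, ∀ x ∈ Ι (a R) (b R), γ R x ∈ secondQuadrant ∧ R ≤ ‖γ R x‖) :
    Tendsto (fun R => ∫ x in a R..b R, f (γ R x)) atTop (𝓝 0) := by
  refine squeeze_zero_norm' (a := fun R => C * (R * Real.exp (-ε * R))) ?_ <| by
    simpa using (tendsto_rpow_mul_exp_neg_mul_atTop_nhds_zero 1 ε hε).const_mul C
  filter_upwards [hlen, hγ] with R hR hγR
  have hedge : ∀ x ∈ Ι (a R) (b R), ‖f (γ R x)‖ ≤ C * Real.exp (-ε * R) := fun x hx =>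
    (hbound _ (hγR x hx).1).trans <|
      mul_le_mul_of_nonneg_left (Real.exp_le_exp.mpr (by nlinarith [(hγR x hx).2])) hC
  calc ‖∫ x in a R..b R, f (γ R x)‖ ≤ C * Real.exp (-ε * R) * |b R - a R| :=
        intervalIntegral.norm_integral_le_of_norm_le_const hedge
    _ ≤ C * Real.exp (-ε * R) * R := by gcongr
    _ = C * (R * Real.exp (-ε * R)) := by ring

theorem tendsto_integral_top_edge [NormedSpace ℝ E] (hC : 0 ≤ C) (hε : 0 < ε)
    (hbound : ∀ z ∈ secondQuadrant, ‖f z‖ ≤ C * Real.exp (-ε * ‖z‖)) :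
    Tendsto (fun R : ℝ => ∫ x in -R..0, f (x + R * I)) atTop (𝓝 0) := by
  refine tendsto_intervalIntegral_zero_of_le_norm (a := fun R => -R) (b := fun _ => 0) hC hε
    hbound ?_ ?_ <;> filter_upwards [eventually_ge_atTop 0] with R hR
  · rw [zero_sub, neg_neg, abs_of_nonneg hR]
  · intro x hx
    rw [uIoc_of_le (neg_nonpos.mpr hR)] at hx
    refine ⟨⟨by simpa using hx.2, by simpa using hR⟩, ?_⟩
    simpa [abs_of_nonneg hR] using abs_im_le_norm (x + R * I)

theorem tendsto_integral_left_edge [NormedSpace ℝ E] (hC : 0 ≤ C) (hε : 0 < ε)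
    (hbound : ∀ z ∈ secondQuadrant, ‖f z‖ ≤ C * Real.exp (-ε * ‖z‖)) :
    Tendsto (fun R : ℝ => ∫ y in 0..R, f (-R + y * I)) atTop (𝓝 0) := by
  refine tendsto_intervalIntegral_zero_of_le_norm (a := fun _ => 0) (b := id) hC hε hbound
    ?_ ?_ <;> filter_upwards [eventually_ge_atTop 0] with R hR
  · rw [id, sub_zero, abs_of_nonneg hR]
  · intro y hy
    rw [id, uIoc_of_le hR] at hy
    refine ⟨⟨by simpa using hR, by simpa using hy.1.le⟩, ?_⟩
    simpa [abs_of_nonneg hR] using abs_re_le_norm (-R + y * I)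

theorem integral_rect_bottom_eq_of_differentiableOn_secondQuadrant [NormedSpace ℂ E]
    [CompleteSpace E] (hf : DifferentiableOn ℂ f secondQuadrant) {R : ℝ} (hR : 0 ≤ R) :
    ∫ x in -R..0, f x =
      (∫ x in -R..0, f (x + R * I)) - I • (∫ y in 0..R, f (I * y)) +
        I • ∫ y in 0..R, f (-R + y * I) := by
  have hrect : [[(-R : ℂ).re, (R * I).re]] ×ℂ [[(-R : ℂ).im, (R * I).im]] ⊆ secondQuadrant := by
    intro z hz
    simp only [mem_reProdIm, neg_re, ofReal_re, neg_im, ofReal_im, mul_re, mul_im, I_re, I_im,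
      mul_zero, mul_one, sub_zero, add_zero, neg_zero, uIcc_of_le hR,
      uIcc_of_le (neg_nonpos.mpr hR)] at hz
    exact ⟨hz.1.2, hz.2.1⟩
  have h := integral_boundary_rect_eq_zero_of_differentiableOn f _ _ (hf.mono hrect)
  simp only [neg_re, neg_im, ofReal_re, ofReal_im, mul_re, mul_im, I_re, I_im, mul_zero, mul_one,
    zero_mul, sub_zero, neg_zero, zero_add, add_zero, ofReal_zero, ofReal_neg] at h
  rw [show (fun y : ℝ => f (y * I)) = fun y : ℝ => f (I * y) by simp only [mul_comm] ] at h
  rw [← sub_eq_zero, ← h]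
  abel

end SecondQuadrant

theorem wick_rotation_general
    (f : ℂ → ℂ) (U : Set ℂ)
    (hQU : {z : ℂ | z.re ≤ 0 ∧ 0 ≤ z.im} ⊆ U)
    (hf : DifferentiableOn ℂ f U)
    (C ε : ℝ) (hε : 0 < ε)
    (hbound : ∀ z ∈ {z : ℂ | z.re ≤ 0 ∧ 0 ≤ z.im}, ‖f z‖ ≤ C * Real.exp (-ε * ‖z‖)) :
    IntegrableOn (fun x : ℝ => f (x : ℂ)) (Iio (0 : ℝ)) ∧
    IntegrableOn (fun t : ℝ => f (Complex.I * (t : ℂ))) (Ioi (0 : ℝ)) ∧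
    ∫ x in Iio (0 : ℝ), f (x : ℂ) =
      -Complex.I * ∫ t in Ioi (0 : ℝ), f (Complex.I * (t : ℂ)) := by
  have hfQ : DifferentiableOn ℂ f secondQuadrant := hf.mono hQU
  have hC : 0 ≤ C := by simpa using (norm_nonneg _).trans (hbound 0 ⟨le_rfl, le_rfl⟩)
  have hreal : IntegrableOn (fun x : ℝ => f x) (Iio 0) :=
    integrableOn_comp_of_mapsTo_secondQuadrant hfQ.continuousOn hε hbound measurableSet_Iio
      continuous_ofReal (fun x hx => ⟨by simpa using hx.le, by simp⟩) norm_real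
  have himag : IntegrableOn (fun t : ℝ => f (I * t)) (Ioi 0) :=
    integrableOn_comp_of_mapsTo_secondQuadrant hfQ.continuousOn hε hbound measurableSet_Ioi
      (continuous_const.mul continuous_ofReal) (fun t ht => ⟨by simp, by simpa using ht.le⟩)
      (fun t => by simp)
  refine ⟨hreal, himag,
    tendsto_nhds_unique (f := fun R : ℝ => ∫ x in -R..0, f x) (l := atTop) ?_ ?_⟩
  · have h := intervalIntegral_tendsto_integral_Iic 0
      ((integrableOn_Iic_iff_integrableOn_Iio).mpr hreal) tendsto_neg_atTop_atBot
    rwa [integral_Iic_eq_integral_Iio] at h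
  have hcontour := ((tendsto_integral_top_edge hC hε hbound).sub
    ((intervalIntegral_tendsto_integral_Ioi 0 himag tendsto_id).const_smul I)).add
    ((tendsto_integral_left_edge hC hε hbound).const_smul I)
  simp only [zero_sub, smul_eq_mul, mul_zero, add_zero, ← neg_mul] at hcontour
  refine hcontour.congr' ?_
  filter_upwards [eventually_ge_atTop 0] with R hR
  exact (integral_rect_bottom_eq_of_differentiableOn_secondQuadrant hfQ hR).symm

/-- **Wick rotation.** If `f` is complex-differentiable on an open set containing the
closed second quadrant `Q = {z | Re z ≤ 0 ∧ Im z ≥ 0}` and decays exponentially on `Q`,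
then the integral of `f` along the negative real axis can be rotated onto the positive
imaginary axis, both integrals being absolutely convergent. -/
theorem wick_rotation
    (f : ℂ → ℂ) (U : Set ℂ) (hU : IsOpen U)
    (hQU : {z : ℂ | z.re ≤ 0 ∧ 0 ≤ z.im} ⊆ U)
    (hf : DifferentiableOn ℂ f U)
    (C ε : ℝ) (hC : 0 < C) (hε : 0 < ε)
    (hbound : ∀ z ∈ {z : ℂ | z.re ≤ 0 ∧ 0 ≤ z.im}, ‖f z‖ ≤ C * Real.exp (-ε * ‖z‖)) :
    IntegrableOn (fun x : ℝ => f (x : ℂ)) (Iio (0 : ℝ)) ∧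
    IntegrableOn (fun t : ℝ => f (Complex.I * (t : ℂ))) (Ioi (0 : ℝ)) ∧
    ∫ x in Iio (0 : ℝ), f (x : ℂ) =
      -Complex.I * ∫ t in Ioi (0 : ℝ), f (Complex.I * (t : ℂ)) :=
  wick_rotation_general f U hQU hf C ε hε hbound
end

section
/- Let κ, μ ∈ ℝ and define A(κ) = iπ / (cosh(πκ) · Γ(1/2 − iκ − iμ) · Γ(1/2 − iκ + iμ)), where Γ is the complex Gamma function. Then e^{πκ}·A(−κ) − e^{−πκ}·conj(A(κ)) = 2πi / (Γ(1/2 + iκ − iμ) · Γ(1/2 + iκ + iμ)); that is, A solves the helical-reality constraint for the coefficient of the factorized correction to the bulk-bulk propagator. -/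
open Complex

private lemma aux_alg (E F A B X : ℂ) (hA : A ≠ 0) (hB : B ≠ 0) (hEF : E + F ≠ 0) :
    E * (X / (((E + F) / 2) * A * B)) - F * (-X / (((E + F) / 2) * B * A)) =
      2 * X / (A * B) := by
  field_simp
  ring

/-- The coefficient `A_h = A(κ̃)` of the factorized correction
`ΔG_σ^{(h)}(η₁,η₂,k) = A_h · σ_h*(η₁,k)·σ_h*(η₂,k)` to the bulk-bulk propagator,
for dimensionless chemical potential `κ` and dimensionless mass `μ`. -/
noncomputable def Acoef (κ μ : ℝ) : ℂ :=
  Complex.I * (Real.pi : ℂ) /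
    ((Real.cosh (Real.pi * κ) : ℂ) *
      Complex.Gamma (1/2 - Complex.I * (κ : ℂ) - Complex.I * (μ : ℂ)) *
      Complex.Gamma (1/2 - Complex.I * (κ : ℂ) + Complex.I * (μ : ℂ)))

/-- `A` solves the helical-reality constraint
`e^{πκ}·A(−κ) − e^{−πκ}·conj(A(κ)) = 2πi / (Γ(1/2+iκ−iμ)·Γ(1/2+iκ+iμ))`. -/
theorem Acoef_helical_reality_constraint (κ μ : ℝ) :
    (Real.exp (Real.pi * κ) : ℂ) * Acoef (-κ) μ -
      (Real.exp (-(Real.pi * κ)) : ℂ) * (starRingEnd ℂ) (Acoef κ μ) =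
    2 * (Real.pi : ℂ) * Complex.I /
      (Complex.Gamma (1/2 + Complex.I * (κ : ℂ) - Complex.I * (μ : ℂ)) *
        Complex.Gamma (1/2 + Complex.I * (κ : ℂ) + Complex.I * (μ : ℂ))) := by
  have h1 : Complex.Gamma (1/2 + Complex.I * (κ : ℂ) - Complex.I * (μ : ℂ)) ≠ 0 := by
    apply Complex.Gamma_ne_zero_of_re_pos; simp
  have h2 : Complex.Gamma (1/2 + Complex.I * (κ : ℂ) + Complex.I * (μ : ℂ)) ≠ 0 := by
    apply Complex.Gamma_ne_zero_of_re_pos; simp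
  have e1 : Acoef (-κ) μ = Complex.I * (Real.pi : ℂ) /
      ((Real.cosh (Real.pi * κ) : ℂ) *
        Complex.Gamma (1/2 + Complex.I * (κ : ℂ) - Complex.I * (μ : ℂ)) *
        Complex.Gamma (1/2 + Complex.I * (κ : ℂ) + Complex.I * (μ : ℂ))) := by
    unfold Acoef
    rw [show Real.pi * (-κ) = -(Real.pi * κ) by ring, Real.cosh_neg]
    push_cast
    ring_nf
  have e2 : (starRingEnd ℂ) (Acoef κ μ) = -(Complex.I * (Real.pi : ℂ)) /
      ((Real.cosh (Real.pi * κ) : ℂ) *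
        Complex.Gamma (1/2 + Complex.I * (κ : ℂ) + Complex.I * (μ : ℂ)) *
        Complex.Gamma (1/2 + Complex.I * (κ : ℂ) - Complex.I * (μ : ℂ))) := by
    unfold Acoef
    rw [map_div₀]
    rw [show ((starRingEnd ℂ) ((Real.cosh (Real.pi * κ) : ℂ) *
      Complex.Gamma (1/2 - Complex.I * (κ : ℂ) - Complex.I * (μ : ℂ)) *
      Complex.Gamma (1/2 - Complex.I * (κ : ℂ) + Complex.I * (μ : ℂ)))) =
      (starRingEnd ℂ) ((Real.cosh (Real.pi * κ) : ℂ)) *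
      Complex.Gamma ((starRingEnd ℂ) (1/2 - Complex.I * (κ : ℂ) - Complex.I * (μ : ℂ))) *
      Complex.Gamma ((starRingEnd ℂ) (1/2 - Complex.I * (κ : ℂ) + Complex.I * (μ : ℂ))) by
        rw [Complex.Gamma_conj, Complex.Gamma_conj]; push_cast [map_mul]; ring]
    simp only [map_mul, map_sub, map_add, Complex.conj_I, Complex.conj_ofReal,
      map_one, map_ofNat, map_div₀]
    ring_nf
  rw [e1, e2]
  have hcosh : (Real.cosh (Real.pi * κ) : ℂ) =
      ((Real.exp (Real.pi * κ) : ℂ) + (Real.exp (-(Real.pi * κ)) : ℂ)) / 2 := by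
    rw [Real.cosh_eq]; push_cast; ring
  have hee : (Real.exp (Real.pi * κ) : ℂ) + (Real.exp (-(Real.pi * κ)) : ℂ) ≠ 0 := by
    rw [← Complex.ofReal_add]
    exact_mod_cast (by positivity : (0:ℝ) < Real.exp (Real.pi * κ) + Real.exp (-(Real.pi * κ))).ne'
  rw [hcosh, show (2 : ℂ) * (Real.pi : ℂ) * Complex.I = 2 * (Complex.I * (Real.pi : ℂ)) by ring]
  exact aux_alg _ _ _ _ _ h1 h2 hee
end

section
/- Let σ : ℝ → ℂ be any function and η₀ ∈ ℝ with σ(η₀) ≠ 0. Set P = σ(η₀)·conj(σ(η₀)) and K(η) = conj(σ(η))/conj(σ(η₀)). Then for all η₁, η₂ ∈ ℝ: [σ(η₁)·conj(σ(η₂))·𝟙(η₂ ≤ η₁) + σ(η₂)·conj(σ(η₁))·𝟙(η₁ < η₂)] − (σ(η₀)/conj(σ(η₀)))·conj(σ(η₁))·conj(σ(η₂)) = −2i·P·K(η₂)·Im(K(η₁))·𝟙(η₂ ≤ η₁) − 2i·P·K(η₁)·Im(K(η₂))·𝟙(η₁ < η₂), where Im(z) ∈ ℝ is coerced into ℂ.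 That is, the bulk-bulk propagator built from the mode function σ equals −2i·P(k)·K(η₂)·Im K(η₁)·θ(η₁ − η₂) + (η₁ ↔ η₂). -/
open Complex

/-- The wavefunction power spectrum `P = σ(η₀)·σ*(η₀)` built from a mode function. -/
noncomputable def wfPower (σ : ℝ → ℂ) (η₀ : ℝ) : ℂ := σ η₀ * (starRingEnd ℂ) (σ η₀)

/-- The bulk-boundary propagator `K(η) = σ*(η)/σ*(η₀)` built from a mode function. -/
noncomputable def wfK (σ : ℝ → ℂ) (η₀ η : ℝ) : ℂ :=
  (starRingEnd ℂ) (σ η) / (starRingEnd ℂ) (σ η₀)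

open ComplexConjugate

/-! Since `-2i·Im K = K* - K`, each branch reduces to
`P·K(η₂)·(K*(η₁) - K(η₁)) = σ(η₁)σ*(η₂) - (σ(η₀)/σ*(η₀))σ*(η₁)σ*(η₂)`, where the first term
uses `σ(η₀)·(σ(η₁)/σ(η₀)) = σ(η₁)`; the two indicators then sum to one. -/

theorem neg_two_I_mul_mul_conj_mul_conj_div_mul_im_conj_div {s₀ : ℂ} (h₀ : s₀ ≠ 0) (s₁ s₂ : ℂ) :
    -2 * I * (s₀ * conj s₀) * (conj s₂ / conj s₀) * ((conj s₁ / conj s₀).im : ℂ) =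
      s₁ * conj s₂ - s₀ / conj s₀ * conj s₁ * conj s₂ := by
  have hc₀ : conj s₀ ≠ 0 := (map_ne_zero _).mpr h₀
  rw [im_eq_sub_conj, map_div₀, conj_conj, conj_conj]
  field_simp
  ring

theorem neg_two_I_mul_wfPower_mul_wfK_mul_im_wfK {σ : ℝ → ℂ} {η₀ : ℝ} (hσ : σ η₀ ≠ 0)
    (η η' : ℝ) :
    -2 * I * wfPower σ η₀ * wfK σ η₀ η' * ((wfK σ η₀ η).im : ℂ) =
      σ η * conj (σ η') - σ η₀ / conj (σ η₀) * conj (σ η) * conj (σ η') :=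
  neg_two_I_mul_mul_conj_mul_conj_div_mul_im_conj_div hσ _ _

theorem ite_le_add_ite_lt_eq_one {α : Type*} [LinearOrder α] {R : Type*} [AddMonoidWithOne R]
    (a b : α) : ((if b ≤ a then 1 else 0) + (if a < b then 1 else 0) : R) = 1 := by
  rcases le_or_gt b a with h | h
  · simp [h, not_lt.mpr h]
  · simp [h, not_le.mpr h]

/-- The bulk-bulk propagator built from a mode function `σ` with `σ(η₀) ≠ 0` equals
`−2i·P·K(η₂)·Im K(η₁)·𝟙(η₂ ≤ η₁) − 2i·P·K(η₁)·Im K(η₂)·𝟙(η₁ < η₂)`. -/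
theorem bulkBulk_eq_neg_two_I_P_K_ImK (σ : ℝ → ℂ) (η₀ : ℝ) (hσ : σ η₀ ≠ 0) (η₁ η₂ : ℝ) :
    (σ η₁ * (starRingEnd ℂ) (σ η₂) * (if η₂ ≤ η₁ then 1 else 0) +
        σ η₂ * (starRingEnd ℂ) (σ η₁) * (if η₁ < η₂ then 1 else 0)) -
      (σ η₀ / (starRingEnd ℂ) (σ η₀)) * (starRingEnd ℂ) (σ η₁) * (starRingEnd ℂ) (σ η₂) =
    -2 * Complex.I * wfPower σ η₀ * wfK σ η₀ η₂ * (((wfK σ η₀ η₁).im : ℝ) : ℂ) *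
        (if η₂ ≤ η₁ then 1 else 0) +
      -2 * Complex.I * wfPower σ η₀ * wfK σ η₀ η₁ * (((wfK σ η₀ η₂).im : ℝ) : ℂ) *
        (if η₁ < η₂ then 1 else 0) := by
  rw [neg_two_I_mul_wfPower_mul_wfK_mul_im_wfK hσ η₁ η₂,
    neg_two_I_mul_wfPower_mul_wfK_mul_im_wfK hσ η₂ η₁]
  linear_combination σ η₀ / conj (σ η₀) * conj (σ η₁) * conj (σ η₂) *
    ite_le_add_ite_lt_eq_one (R := ℂ) η₁ η₂
end
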